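/- Let 𝖢 be a small category. Define the functor K from presheaves on 𝖢 to the category KFr of Kripke frames and p-morphisms by sending F to its frame of elements (points: pairs (c,x) with x ∈ F(c); relation: (c,x) ≺ (d,y) iff ∃ h : d → c with F(h)(x) = y) and α : F → G to (c,x) ↦ (c, α_c(x)). Define the functor 𝓕 : KFr → Psh(𝖢) by 𝓕(W)(c) = {p-morphisms K(よ(c)) → W} (where よ(c) is the representable presheaf 𝖢[−, c]), with restriction along h : d → c given by precomposition with K(よ(h)). Then K is left adjoint to 𝓕; the counit at W sends a p-morphism g : K(よ(c)) → W to g(id_c), and the unit at F sends x ∈ F(c) to K(x̂), where x̂ : よ(c) → F is the natural transformation corresponding to x under the Yoneda lemma. -/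

import Mathlib

open CategoryTheory

universe u

/-- A p-morphism between Kripke frames `(W, rW)` and `(V, rV)`:
a function that is stable and open. -/
def IsPMorphism {W V : Type*} (rW : W → W → Prop) (rV : V → V → Prop) (f : W → V) : Prop :=
  (∀ ⦃w w'⦄, rW w w' → rV (f w) (f w')) ∧
  (∀ w v', rV (f w) v' → ∃ w', rW w w' ∧ f w' = v')

/-- A Kripke frame: a set together with a binary relation on it. -/
structure KFrame : Type (u + 1) where
  carrier : Type u
  rel : carrier → carrier → Prop

instance : CoeSort KFrame.{u} (Type u) := ⟨KFrame.carrier⟩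

/-- Bundled p-morphisms between Kripke frames. -/
structure PMor (W V : KFrame.{u}) : Type u where
  toFun : W → V
  isPMorphism : IsPMorphism W.rel V.rel toFun

@[ext] lemma PMor.ext {W V : KFrame.{u}} {f g : PMor W V} (h : f.toFun = g.toFun) : f = g := by
  cases f; cases g; simpa using h

/-- The category `KFr` of Kripke frames and p-morphisms. -/
instance : Category KFrame.{u} where
  Hom := PMor
  id W := ⟨id, fun _ _ h => h, fun w v' h => ⟨v', h, rfl⟩⟩
  comp f g := ⟨g.toFun ∘ f.toFun,
    fun _ _ h => g.isPMorphism.1 (f.isPMorphism.1 h),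
    fun w z h => by
      obtain ⟨v', hv', hgz⟩ := g.isPMorphism.2 _ z h
      obtain ⟨w', hw', hfv⟩ := f.isPMorphism.2 w v' hv'
      exact ⟨w', hw', by simp [Function.comp, hfv, hgz]⟩⟩
  id_comp f := PMor.ext rfl
  comp_id f := PMor.ext rfl
  assoc f g h := PMor.ext rfl

open Opposite

variable {C : Type u} [SmallCategory C]

/-- The relation on the set of elements of a presheaf `F`:
`(c, x) ≺ (d, y)` iff there is `h : d ⟶ c` in `C` with `F(h)(x) = y`. -/
def KRel (F : Cᵒᵖ ⥤ Type u) :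
    ((c : C) × F.obj (op c)) → ((c : C) × F.obj (op c)) → Prop :=
  fun x y => ∃ h : y.1 ⟶ x.1, F.map h.op x.2 = y.2

/-- The Kripke frame of elements `K(F)` of a presheaf `F`. -/
def KObj (F : Cᵒᵖ ⥤ Type u) : KFrame.{u} :=
  ⟨(c : C) × F.obj (op c), KRel F⟩

/-- The map on elements induced by a natural transformation: `(c, x) ↦ (c, α_c x)`. -/
def KMapFun {F G : Cᵒᵖ ⥤ Type u} (α : F ⟶ G) :
    ((c : C) × F.obj (op c)) → ((c : C) × G.obj (op c)) :=
  fun x => ⟨x.1, α.app (op x.1) x.2⟩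

lemma KMap_isPMorphism {F G : Cᵒᵖ ⥤ Type u} (α : F ⟶ G) :
    IsPMorphism (KRel F) (KRel G) (KMapFun α) := by
  constructor
  · rintro ⟨c, x⟩ ⟨d, y⟩ ⟨h, hh⟩
    dsimp only at h hh
    refine ⟨h, ?_⟩
    show G.map h.op (α.app (op c) x) = α.app (op d) y
    rw [← hh]
    exact (NatTrans.naturality_apply α h.op x).symm
  · rintro ⟨c, x⟩ ⟨d, y⟩ ⟨h, hh⟩
    dsimp only [KMapFun] at h hh
    refine ⟨⟨d, F.map h.op x⟩, ⟨h, rfl⟩, ?_⟩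
    show (⟨d, α.app (op d) (F.map h.op x)⟩ : (c : C) × G.obj (op c)) = ⟨d, y⟩
    exact congrArg (Sigma.mk d) ((NatTrans.naturality_apply α h.op x).trans hh)

/-- The functor `K` from presheaves on `C` to the category of Kripke frames and
p-morphisms. -/
def KFunctor : (Cᵒᵖ ⥤ Type u) ⥤ KFrame.{u} where
  obj := KObj
  map α := ⟨KMapFun α, KMap_isPMorphism α⟩
  map_id _ := PMor.ext rfl
  map_comp _ _ := PMor.ext rfl

/-- The presheaf `𝓕(W)` associated with a Kripke frame `W`:
`𝓕(W)(c)` is the set of p-morphisms `K(よ(c)) → W`, with restriction along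
`h : d ⟶ c` given by precomposition with `K(よ(h))`. -/
def FObj (W : KFrame.{u}) : Cᵒᵖ ⥤ Type u where
  obj X := PMor (KObj (yoneda.obj X.unop)) W
  map h := TypeCat.ofHom fun g => KFunctor.map (yoneda.map h.unop) ≫ g
  map_id X := by
    refine TypeCat.homEquiv.injective (funext fun g => ?_)
    show KFunctor.map (yoneda.map (𝟙 X).unop) ≫ g = g
    simp
    exact PMor.ext rfl
  map_comp h k := by
    refine TypeCat.homEquiv.injective (funext fun g => ?_)
    show KFunctor.map (yoneda.map (h ≫ k).unop) ≫ g =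
      KFunctor.map (yoneda.map k.unop) ≫ KFunctor.map (yoneda.map h.unop) ≫ g
    rw [unop_comp, Functor.map_comp, Functor.map_comp]
    exact PMor.ext rfl

/-- The functor `𝓕` from the category of Kripke frames and p-morphisms to presheaves
on `C`, right adjoint to `K`. -/
def FFunctor : KFrame.{u} ⥤ (Cᵒᵖ ⥤ Type u) where
  obj := FObj
  map f := { app := fun _ => TypeCat.ofHom fun g => g ≫ f
             naturality := fun _ _ _ => rfl }
  map_id _ := rfl
  map_comp _ _ := rfl

/-- Naturality computation: for `α : F ⟶ 𝓕(W)`, restriction acts by precomposition. -/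
lemma FObj_naturality {W : KFrame.{u}} {F : Cᵒᵖ ⥤ Type u} (α : F ⟶ FObj W)
    {c d : C} (h : d ⟶ c) (x : F.obj (op c)) (e : C) (k : e ⟶ d) :
    PMor.toFun (α.app (op d) (F.map h.op x)) ⟨e, k⟩ =
      PMor.toFun (α.app (op c) x) ⟨e, k ≫ h⟩ := by
  have := NatTrans.naturality_apply α h.op x
  rw [this]
  rfl

/-- The backward map of the hom equivalence. -/
def homEquivInv {F : Cᵒᵖ ⥤ Type u} {W : KFrame.{u}} (α : F ⟶ FObj W) :
    PMor (KObj F) W where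
  toFun := fun p => PMor.toFun (α.app (op p.1) p.2) ⟨p.1, 𝟙 p.1⟩
  isPMorphism := by
    constructor
    · rintro ⟨c, x⟩ ⟨d, y⟩ ⟨h, hh⟩
      dsimp only at h hh
      rw [← hh]
      have := FObj_naturality α h x d (𝟙 d)
      rw [Category.id_comp] at this
      show W.rel (PMor.toFun (α.app (op c) x) ⟨c, 𝟙 c⟩)
        (PMor.toFun (α.app (op d) (F.map h.op x)) ⟨d, 𝟙 d⟩)
      rw [this]
      exact (PMor.isPMorphism (α.app (op c) x)).1 ⟨h, by simp⟩
    · rintro ⟨c, x⟩ v' hv'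
      obtain ⟨⟨d, h⟩, ⟨k, hk⟩, hfv⟩ := (PMor.isPMorphism (α.app (op c) x)).2 _ v' hv'
      refine ⟨⟨d, F.map h.op x⟩, ⟨h, rfl⟩, ?_⟩
      show PMor.toFun (α.app (op d) (F.map h.op x)) ⟨d, 𝟙 d⟩ = v'
      have := FObj_naturality α h x d (𝟙 d)
      rw [Category.id_comp] at this
      rw [this, hfv]

lemma homEquivInv_comp {F : Cᵒᵖ ⥤ Type u} {W : KFrame.{u}} (α : F ⟶ FObj W)
    {c : C} (x : F.obj (op c)) :
    KFunctor.map (yonedaEquiv.symm x) ≫ homEquivInv α = α.app (op c) x := by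
  apply PMor.ext
  funext ⟨d, h⟩
  show PMor.toFun (α.app (op d) ((yonedaEquiv.symm x).app (op d) h)) ⟨d, 𝟙 d⟩ =
    PMor.toFun (α.app (op c) x) ⟨d, h⟩
  have hy : (yonedaEquiv.symm x).app (op d) h = F.map h.op x := by
    simp [yonedaEquiv]
  rw [hy]
  have := FObj_naturality α h x d (𝟙 d)
  rw [Category.id_comp] at this
  exact this

/-- The hom equivalence of the adjunction. -/
def homEquivK (F : Cᵒᵖ ⥤ Type u) (W : KFrame.{u}) :
    (KFunctor.obj F ⟶ W) ≃ (F ⟶ FFunctor.obj W) where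
  toFun f :=
    { app := fun c => TypeCat.ofHom fun x => KFunctor.map (yonedaEquiv.symm x) ≫ f
      naturality := by
        intro c d h
        refine TypeCat.homEquiv.injective (funext fun x => ?_)
        show KFunctor.map (yonedaEquiv.symm (F.map h x)) ≫ f =
          KFunctor.map (yoneda.map h.unop) ≫ KFunctor.map (yonedaEquiv.symm x) ≫ f
        rw [← Category.assoc, ← Functor.map_comp]
        congr 2
        apply yonedaEquiv.injective
        simp [yonedaEquiv] }
  invFun := homEquivInv
  left_inv f := by
    apply PMor.ext
    funext ⟨c, x⟩
    show (KFunctor.map (yonedaEquiv.symm x) ≫ f).toFun ⟨c, 𝟙 c⟩ = f.toFun ⟨c, x⟩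
    show f.toFun ⟨c, (yonedaEquiv.symm x).app (op c) (𝟙 c)⟩ = f.toFun ⟨c, x⟩
    congr 1
    have : (yonedaEquiv.symm x).app (op c) (𝟙 c) = x := by
      simp [yonedaEquiv]
    rw [this]
  right_inv α := by
    ext c x
    exact homEquivInv_comp α x

/-- The functor `K` (from presheaves on a small category `C` to the
category `KFr` of Kripke frames and p-morphisms) is left adjoint to `𝓕`; the counit
at a frame `W` sends a p-morphism `g : K(よ(c)) → W` (viewed as the element `(c, g)`
of `K(𝓕(W))`) to `g(id_c)`, and the unit at a presheaf `F` sends `x ∈ F(c)` to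
`K(x̂)`, where `x̂ : よ(c) ⟶ F` corresponds to `x` under the Yoneda lemma. -/
theorem statement15 :
    ∃ adj : KFunctor (C := C) ⊣ FFunctor,
      (∀ (W : KFrame.{u}) (c : C) (g : PMor (KObj (yoneda.obj c)) W),
        (adj.counit.app W).toFun ⟨c, g⟩ = g.toFun ⟨c, 𝟙 c⟩) ∧
      (∀ (F : Cᵒᵖ ⥤ Type u) (c : C) (x : F.obj (op c)),
        (adj.unit.app F).app (op c) x = KFunctor.map (yonedaEquiv.symm x)) := by
  refine ⟨Adjunction.mkOfHomEquiv
    { homEquiv := homEquivK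
      homEquiv_naturality_left_symm := ?_
      homEquiv_naturality_right := ?_ }, ?_, ?_⟩
  · intro F G W β α
    apply PMor.ext
    funext ⟨c, x⟩
    rfl
  · intro F W V f g
    ext c x
    show KFunctor.map (yonedaEquiv.symm x) ≫ f ≫ g =
      (KFunctor.map (yonedaEquiv.symm x) ≫ f) ≫ g
    rw [Category.assoc]
  · intro W c g
    rfl
  · intro F c x
    show KFunctor.map (yonedaEquiv.symm x) ≫ 𝟙 _ = KFunctor.map (yonedaEquiv.symm x)
    rw [Category.comp_id]
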